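/- For a family 𝒯 of complete L-theories: (1) 𝒯 is 0-minimal if and only if 𝒯 is a singleton; (2) 𝒯 is 1-minimal if and only if 𝒯 is infinite and e-minimal; (3) 𝒯 is 2-minimal if and only if 𝒯 is a-minimal; (4) for any ordinal α, 𝒯 is α-minimal if and only if RS(𝒯) = α and ds(𝒯) = 1. -/

import Mathlib

open FirstOrder Language Cardinal Set

universe u v w

variable {L : FirstOrder.Language.{u, v}}

/-- A complete theory: a satisfiable set of sentences containing each sentence or its
negation (`Theory.IsMaximal` in Mathlib). -/
abbrev CTheory (L : FirstOrder.Language.{u, v}) : Type max u v :=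
  {T : L.Theory // T.IsMaximal}

/-- The neighbourhood `𝒯_φ = {T ∈ 𝒯 | φ ∈ T}`. -/
def nbhd (𝒯 : Set (CTheory L)) (φ : L.Sentence) : Set (CTheory L) :=
  {T | T ∈ 𝒯 ∧ φ ∈ T.1}

/-- `T` is an accumulation point of `𝒯` if for every sentence `φ ∈ T` the set `𝒯_φ` is
infinite. -/
def IsAccPoint (𝒯 : Set (CTheory L)) (T : CTheory L) : Prop :=
  ∀ φ : L.Sentence, φ ∈ T.1 → (nbhd 𝒯 φ).Infinite

/-- The `E`-closure of `𝒯`: `𝒯` together with all its accumulation points. -/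
def ClE (𝒯 : Set (CTheory L)) : Set (CTheory L) :=
  𝒯 ∪ {T | IsAccPoint 𝒯 T}

/-- The `e`-spectrum of `𝒯`: the cardinality of the set of accumulation points of `𝒯`. -/
noncomputable def eSp (𝒯 : Set (CTheory L)) : Cardinal :=
  Cardinal.mk {T : CTheory L // IsAccPoint 𝒯 T}

/-- Two sentences are inconsistent if `{φ, ψ}` is unsatisfiable. -/
def Inconsistent (φ ψ : L.Sentence) : Prop :=
  ¬ FirstOrder.Language.Theory.IsSatisfiable ({φ, ψ} : L.Theory)

open Classical in
/-- `RSge α 𝒯` says `RS(𝒯) ≥ α`: `RS(𝒯) ≥ 0` iff `𝒯 ≠ ∅`; `RS(𝒯) ≥ 1` iff `𝒯` is infinite;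
for `β ≥ 1`, `RS(𝒯) ≥ β + 1` iff there are pairwise inconsistent sentences `φ_n`, `n ∈ ℕ`,
with `RS(𝒯_{φ_n}) ≥ β` for all `n`; for limit `λ`, `RS(𝒯) ≥ λ` iff `RS(𝒯) ≥ β` for all
`β < λ`. -/
noncomputable def RSge (α : Ordinal.{w}) : Set (CTheory L) → Prop :=
  @Ordinal.limitRecOn (fun _ => Set (CTheory L) → Prop) α
    (fun 𝒯 => 𝒯.Nonempty)
    (fun β ih 𝒯 =>
      if β = 0 then 𝒯.Infinite
      else ∃ φ : ℕ → L.Sentence,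
        (∀ m n : ℕ, m ≠ n → Inconsistent (φ m) (φ n)) ∧ ∀ k : ℕ, ih (nbhd 𝒯 (φ k)))
    (fun β _ ih 𝒯 => ∀ γ : Ordinal, ∀ h : γ < β, ih γ h 𝒯)

/-- `RS(𝒯) = α` for an ordinal `α`: `RS(𝒯) ≥ α` but not `RS(𝒯) ≥ α + 1`. -/
def RSeq (𝒯 : Set (CTheory L)) (α : Ordinal.{w}) : Prop :=
  RSge α 𝒯 ∧ ¬ RSge (α + 1) 𝒯

/-- `RS(𝒯) = ∞`: `RS(𝒯) ≥ α` for every ordinal `α`. -/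
def RSinf (𝒯 : Set (CTheory L)) : Prop :=
  ∀ α : Ordinal.{w}, RSge α 𝒯

/-- `ds(𝒯) = n` (relative to `RS(𝒯) = α`): `n` is the largest natural number for which
there exist `n` pairwise inconsistent sentences `φ_1, …, φ_n` with `RS(𝒯_{φ_i}) = α`. -/
def dsEq (𝒯 : Set (CTheory L)) (α : Ordinal.{w}) (n : ℕ) : Prop :=
  IsGreatest {m : ℕ | ∃ φ : Fin m → L.Sentence,
    (∀ i j : Fin m, i ≠ j → Inconsistent (φ i) (φ j)) ∧
    ∀ i : Fin m, RSeq (nbhd 𝒯 (φ i)) α} n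

/-- `𝒯` is `e`-minimal: for every sentence `φ`, `𝒯_φ` is finite or `𝒯_{¬φ}` is finite. -/
def EMinimal (𝒯 : Set (CTheory L)) : Prop :=
  ∀ φ : L.Sentence, (nbhd 𝒯 φ).Finite ∨ (nbhd 𝒯 φ.not).Finite

/-- `𝒯` is `a`-minimal: `𝒯` has infinitely many accumulation points and for every sentence
`φ`, `𝒯_φ` or `𝒯_{¬φ}` has only finitely many accumulation points. -/
def AMinimal (𝒯 : Set (CTheory L)) : Prop :=
  {T : CTheory L | IsAccPoint 𝒯 T}.Infinite ∧
  ∀ φ : L.Sentence,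
    {T : CTheory L | IsAccPoint (nbhd 𝒯 φ) T}.Finite ∨
    {T : CTheory L | IsAccPoint (nbhd 𝒯 φ.not) T}.Finite

/-- `𝒯` is `α`-minimal: `RS(𝒯) = α` and for every sentence `φ`, `RS(𝒯_φ) < α` or
`RS(𝒯_{¬φ}) < α`. -/
def AlphaMinimal (𝒯 : Set (CTheory L)) (α : Ordinal.{w}) : Prop :=
  RSeq 𝒯 α ∧
  ∀ φ : L.Sentence, ¬ RSge α (nbhd 𝒯 φ) ∨ ¬ RSge α (nbhd 𝒯 φ.not)


/-!
All four parts rest on one observation: a splitting condition "for every `φ`, `RS(𝒯_φ) < α` or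
`RS(𝒯_{¬φ}) < α`" already forces `RS(𝒯) < α + 1`, since two members `φ₀, φ₁` of an inconsistent
sequence give `𝒯_{φ₁} ⊆ 𝒯_{¬φ₀}` (and for `α = 0` it makes `𝒯` a subsingleton). So `α`-minimality
is `RS(𝒯) ≥ α` plus the splitting condition, which is exactly `ds(𝒯) = 1` once `RS(𝒯) = α`.
Parts (1)–(3) then only need the meaning of `RS ≥ 0, 1, 2`. The last one is the real content:
`RS(𝒯) ≥ 2` iff `𝒯` has infinitely many accumulation points. An infinite `𝒯_φ` yields an
accumulation point containing `φ` as an ultrafilter limit, and conversely an infinite set of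
complete theories is split by a tree argument into infinitely many pairwise inconsistent sentences.
-/

namespace CTheory

variable (T T' : CTheory L) {φ ψ : L.Sentence}

theorem mem_iff_realize (M : T.1.ModelType) : φ ∈ T.1 ↔ M ⊨ φ := by
  rw [T.2.mem_iff_models, T.2.isComplete.realize_sentence_iff φ M]

theorem not_mem_iff : φ.not ∈ T.1 ↔ φ ∉ T.1 := by
  obtain ⟨M⟩ := T.2.1
  rw [mem_iff_realize T M, mem_iff_realize T M, Sentence.realize_not]

theorem inf_mem_iff : φ ⊓ ψ ∈ T.1 ↔ φ ∈ T.1 ∧ ψ ∈ T.1 := by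
  obtain ⟨M⟩ := T.2.1
  rw [mem_iff_realize T M, mem_iff_realize T M, mem_iff_realize T M, Sentence.realize_inf]

theorem top_mem : (⊤ : L.Sentence) ∈ T.1 := by
  obtain ⟨M⟩ := T.2.1
  exact (mem_iff_realize T M).2 (Sentence.realize_top M)

variable {T T'} in
theorem eq_of_subset (h : T.1 ⊆ T'.1) : T = T' := by
  refine Subtype.ext (h.antisymm fun φ hφ => ?_)
  by_contra hφT
  exact (not_mem_iff T').1 (h ((not_mem_iff T).2 hφT)) hφ

variable {T T'} in
theorem exists_mem_not_mem_not (h : T ≠ T') : ∃ φ, φ ∈ T.1 ∧ φ.not ∈ T'.1 := by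
  obtain ⟨φ, hφT, hφT'⟩ := Set.not_subset.1 (mt eq_of_subset h)
  exact ⟨φ, hφT, (not_mem_iff T').2 hφT'⟩

def ultralimit (U : Ultrafilter (CTheory L)) : CTheory L where
  val := {φ | {T : CTheory L | φ ∈ T.1} ∈ U}
  property := by
    refine ⟨(Theory.isSatisfiable_iff_isFinitelySatisfiable).2 fun s hs => ?_, fun φ => ?_⟩
    · have hmem : (⋂ φ ∈ s, {T : CTheory L | φ ∈ T.1}) ∈ U :=
        (Filter.biInter_finset_mem s).2 fun φ hφ => hs hφ
      obtain ⟨T, hT⟩ := U.nonempty_of_mem hmem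
      exact T.2.1.mono fun φ hφ => Set.mem_iInter₂.1 hT φ hφ
    · refine (U.mem_or_compl_mem {T : CTheory L | φ ∈ T.1}).imp id fun h => ?_
      exact Filter.mem_of_superset h fun T hT => (not_mem_iff T).2 hT

end CTheory

section Neighbourhoods

variable {𝒯 𝒜 ℬ : Set (CTheory L)} {φ ψ : L.Sentence}

theorem inconsistent_iff : Inconsistent φ ψ ↔ ∀ T : CTheory L, φ ∈ T.1 → ψ ∉ T.1 := by
  refine ⟨fun h T hφ hψ => h (T.2.1.mono (Set.pair_subset hφ hψ)), fun h ⟨M⟩ => ?_⟩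
  have hmem : ∀ χ ∈ ({φ, ψ} : L.Theory), χ ∈ L.completeTheory M := fun χ hχ =>
    Theory.realize_sentence_of_mem _ hχ
  exact h ⟨_, completeTheory.isMaximal L M⟩ (hmem φ (by simp)) (hmem ψ (by simp))

theorem Inconsistent.symm (h : Inconsistent φ ψ) : Inconsistent ψ φ := by
  rwa [Inconsistent, Set.pair_comm]

theorem inconsistent_not_right (φ : L.Sentence) : Inconsistent φ φ.not :=
  inconsistent_iff.2 fun T hφ hφn => (CTheory.not_mem_iff T).1 hφn hφ

@[simp]
theorem mem_nbhd {T : CTheory L} : T ∈ nbhd 𝒯 φ ↔ T ∈ 𝒯 ∧ φ ∈ T.1 := Iff.rfl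

theorem nbhd_mono (h : 𝒜 ⊆ ℬ) (φ : L.Sentence) : nbhd 𝒜 φ ⊆ nbhd ℬ φ :=
  fun _ hT => ⟨h hT.1, hT.2⟩

theorem nbhd_subset (𝒯 : Set (CTheory L)) (φ : L.Sentence) : nbhd 𝒯 φ ⊆ 𝒯 :=
  fun _ hT => hT.1

@[simp]
theorem nbhd_top (𝒯 : Set (CTheory L)) : nbhd 𝒯 ⊤ = 𝒯 :=
  Set.ext fun T => and_iff_left (CTheory.top_mem T)

theorem Inconsistent.nbhd_subset_nbhd_not (h : Inconsistent φ ψ) (𝒯 : Set (CTheory L)) :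
    nbhd 𝒯 ψ ⊆ nbhd 𝒯 φ.not :=
  fun T hT => ⟨hT.1, (CTheory.not_mem_iff T).2 fun hφ => inconsistent_iff.1 h T hφ hT.2⟩

theorem subsingleton_iff_forall_nbhd :
    𝒯.Subsingleton ↔ ∀ φ, ¬ (nbhd 𝒯 φ).Nonempty ∨ ¬ (nbhd 𝒯 φ.not).Nonempty := by
  refine ⟨fun h φ => ?_, fun h T hT T' hT' => ?_⟩
  · by_contra! hboth
    obtain ⟨⟨T, hT, hφ⟩, ⟨T', hT', hφn⟩⟩ := hboth
    exact (CTheory.not_mem_iff T').1 hφn (h hT hT' ▸ hφ)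
  · by_contra hne
    obtain ⟨φ, hφ, hφn⟩ := CTheory.exists_mem_not_mem_not hne
    exact (h φ).elim (· ⟨T, hT, hφ⟩) (· ⟨T', hT', hφn⟩)

end Neighbourhoods

section Rank

variable {𝒯 𝒜 ℬ : Set (CTheory L)} {φ : L.Sentence} {α : Ordinal.{w}}

theorem RSge_zero (𝒯 : Set (CTheory L)) : RSge (0 : Ordinal.{w}) 𝒯 ↔ 𝒯.Nonempty := by
  rw [RSge, Ordinal.limitRecOn_zero]

theorem RSge_one (𝒯 : Set (CTheory L)) : RSge (1 : Ordinal.{w}) 𝒯 ↔ 𝒯.Infinite := by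
  rw [RSge, ← zero_add 1, Ordinal.limitRecOn_add_one, if_pos rfl]

theorem RSge_add_one {β : Ordinal.{w}} (hβ : β ≠ 0) (𝒯 : Set (CTheory L)) :
    RSge (β + 1) 𝒯 ↔ ∃ φ : ℕ → L.Sentence,
      (∀ m n : ℕ, m ≠ n → Inconsistent (φ m) (φ n)) ∧ ∀ k, RSge β (nbhd 𝒯 (φ k)) := by
  rw [RSge, Ordinal.limitRecOn_add_one, if_neg hβ]
  rfl

theorem RSge_of_isSuccLimit {β : Ordinal.{w}} (hβ : Order.IsSuccLimit β)
    (𝒯 : Set (CTheory L)) : RSge β 𝒯 ↔ ∀ γ < β, RSge γ 𝒯 := by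
  rw [RSge, Ordinal.limitRecOn_limit _ _ _ _ hβ]
  rfl

theorem RSge_two (𝒯 : Set (CTheory L)) :
    RSge (2 : Ordinal.{w}) 𝒯 ↔ ∃ φ : ℕ → L.Sentence,
      (∀ m n : ℕ, m ≠ n → Inconsistent (φ m) (φ n)) ∧ ∀ k, (nbhd 𝒯 (φ k)).Infinite := by
  simp only [← one_add_one_eq_two, RSge_add_one one_ne_zero, RSge_one]

theorem RSge.mono (h : 𝒜 ⊆ ℬ) (hα : RSge α 𝒜) : RSge α ℬ := by
  induction α using Ordinal.limitRecOn generalizing 𝒜 ℬ with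
  | zero => exact ((RSge_zero 𝒜).1 hα).mono h |> (RSge_zero ℬ).2
  | add_one β ih =>
    rcases eq_or_ne β 0 with rfl | hβ
    · rw [zero_add, RSge_one] at *
      exact hα.mono h
    · rw [RSge_add_one hβ] at *
      obtain ⟨φ, hinc, hφ⟩ := hα
      exact ⟨φ, hinc, fun k => ih (nbhd_mono h _) (hφ k)⟩
  | limit β hβ ih =>
    rw [RSge_of_isSuccLimit hβ] at *
    exact fun γ hγ => ih γ hγ h (hα γ hγ)

theorem Inconsistent.RSge_nbhd_not {ψ : L.Sentence} (h : Inconsistent φ ψ)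
    (hψ : RSge α (nbhd 𝒯 ψ)) : RSge α (nbhd 𝒯 φ.not) :=
  hψ.mono (h.nbhd_subset_nbhd_not 𝒯)

theorem not_RSge_add_one_of_forall
    (h : ∀ φ, ¬ RSge α (nbhd 𝒯 φ) ∨ ¬ RSge α (nbhd 𝒯 φ.not)) : ¬ RSge (α + 1) 𝒯 := by
  rcases eq_or_ne α 0 with rfl | hα
  · simp only [RSge_zero] at h
    rw [zero_add, RSge_one, Set.not_infinite]
    exact (subsingleton_iff_forall_nbhd.2 h).finite
  · rw [RSge_add_one hα]
    rintro ⟨φ, hinc, hφ⟩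
    exact (h (φ 0)).elim (· (hφ 0)) (· ((hinc 0 1 zero_ne_one).RSge_nbhd_not (hφ 1)))

theorem alphaMinimal_iff :
    AlphaMinimal 𝒯 α ↔ RSge α 𝒯 ∧ ∀ φ, ¬ RSge α (nbhd 𝒯 φ) ∨ ¬ RSge α (nbhd 𝒯 φ.not) :=
  ⟨fun h => ⟨h.1.1, h.2⟩, fun h => ⟨⟨h.1, not_RSge_add_one_of_forall h.2⟩, h.2⟩⟩

theorem RSeq.nbhd_of_RSge (h : RSeq 𝒯 α) (hφ : RSge α (nbhd 𝒯 φ)) : RSeq (nbhd 𝒯 φ) α :=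
  ⟨hφ, fun h' => h.2 (h'.mono (nbhd_subset 𝒯 φ))⟩

theorem RSeq.dsEq_one_iff (h : RSeq 𝒯 α) :
    dsEq 𝒯 α 1 ↔ ∀ φ, ¬ RSge α (nbhd 𝒯 φ) ∨ ¬ RSge α (nbhd 𝒯 φ.not) := by
  have hone : 1 ∈ {m : ℕ | ∃ φ : Fin m → L.Sentence,
      (∀ i j : Fin m, i ≠ j → Inconsistent (φ i) (φ j)) ∧ ∀ i, RSeq (nbhd 𝒯 (φ i)) α} :=
    ⟨fun _ => ⊤, fun i j hij => absurd (Subsingleton.elim i j) hij, fun _ => by simpa using h⟩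
  refine ⟨fun hds φ => ?_, fun hsplit => ⟨hone, ?_⟩⟩
  · by_contra! hboth
    have htwo : 2 ≤ 1 := hds.2 ⟨![φ, φ.not], ?_, ?_⟩
    · omega
    · intro i j hij
      fin_cases i <;> fin_cases j
      all_goals first
        | exact absurd rfl hij
        | exact inconsistent_not_right φ
        | exact (inconsistent_not_right φ).symm
    · intro i
      fin_cases i
      exacts [h.nbhd_of_RSge hboth.1, h.nbhd_of_RSge hboth.2]
  · rintro m ⟨φ, hinc, hφ⟩
    by_contra! hm
    exact (hsplit (φ ⟨0, by omega⟩)).elim (· (hφ _).1)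
      (· ((hinc _ ⟨1, by omega⟩ (by simp)).RSge_nbhd_not (hφ _).1))

end Rank

section AccumulationPoints

variable {𝒜 S : Set (CTheory L)} {φ ψ : L.Sentence}

theorem exists_isAccPoint_mem (h : (nbhd 𝒜 φ).Infinite) :
    ∃ T, IsAccPoint 𝒜 T ∧ φ ∈ T.1 := by
  have := h.cofinite_inf_principal_neBot
  let U := Ultrafilter.of (Filter.cofinite ⊓ Filter.principal (nbhd 𝒜 φ))
  have hU : ↑U ≤ Filter.cofinite ⊓ Filter.principal (nbhd 𝒜 φ) := Ultrafilter.of_le _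
  have hφU : nbhd 𝒜 φ ∈ U := Filter.le_principal_iff.1 (hU.trans inf_le_right)
  refine ⟨CTheory.ultralimit U, fun ψ hψ => ?_, Filter.mem_of_superset hφU fun T hT => hT.2⟩
  have hmem : nbhd 𝒜 ψ ∈ U :=
    Filter.mem_of_superset (Filter.inter_mem hφU hψ) fun T hT => ⟨hT.1.1, hT.2⟩
  exact Filter.frequently_cofinite_mem_iff_infinite.1
    ((Filter.Eventually.frequently hmem).filter_mono (hU.trans inf_le_left))

theorem exists_split_of_infinite (h : (nbhd S ψ).Infinite) :
    ∃ χ, (nbhd S (ψ ⊓ χ)).Infinite ∧ (nbhd S (ψ ⊓ χ.not)).Nonempty := by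
  obtain ⟨T, hT, T', hT', hne⟩ := h.nontrivial
  obtain ⟨φ, hφ, hφn⟩ := CTheory.exists_mem_not_mem_not hne
  have hunion : nbhd S ψ ⊆ nbhd S (ψ ⊓ φ) ∪ nbhd S (ψ ⊓ φ.not) := fun T₀ hT₀ => by
    simp only [Set.mem_union, mem_nbhd, CTheory.inf_mem_iff, CTheory.not_mem_iff] at hT₀ ⊢
    tauto
  rcases Set.infinite_union.1 (h.mono hunion) with hinf | hinf
  · exact ⟨φ, hinf, T', by simp_all [CTheory.inf_mem_iff]⟩
  · exact ⟨φ.not, hinf, T, by simp_all [CTheory.inf_mem_iff, CTheory.not_mem_iff]⟩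

/-- The usual tree argument: keep splitting a sentence `ψₙ` true in infinitely many members of
`S` as `ψₙ₊₁ = ψₙ ⊓ χₙ` and `φₙ = ψₙ ⊓ ¬χₙ`; then `φₘ` and `φₙ ⊨ ψₘ₊₁` are inconsistent for
`m < n`. -/
theorem exists_pairwise_inconsistent_of_infinite (hS : S.Infinite) :
    ∃ φ : ℕ → L.Sentence,
      (∀ m n : ℕ, m ≠ n → Inconsistent (φ m) (φ n)) ∧ ∀ k, (nbhd S (φ k)).Nonempty := by
  choose χ hχ using fun θ : {θ : L.Sentence // (nbhd S θ).Infinite} => exists_split_of_infinite θ.2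
  let next (θ : {θ : L.Sentence // (nbhd S θ).Infinite}) : {θ // (nbhd S θ).Infinite} :=
    ⟨θ.1 ⊓ χ θ, (hχ θ).1⟩
  let ψ (n : ℕ) := next^[n] ⟨⊤, by simpa using hS⟩
  have hanti : Antitone fun n => {T : CTheory L | (ψ n).1 ∈ T.1} :=
    antitone_nat_of_succ_le fun n T hT => by
      simp only [ψ, Function.iterate_succ_apply', Set.mem_ofPred_eq, next,
        CTheory.inf_mem_iff] at hT
      exact hT.1
  have hlt : ∀ m n, m < n → Inconsistent ((ψ m).1 ⊓ (χ (ψ m)).not) ((ψ n).1 ⊓ (χ (ψ n)).not) := by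
    refine fun m n hmn => inconsistent_iff.2 fun T hm hn => ?_
    have hsucc : (ψ (m + 1)).1 ∈ T.1 := hanti hmn ((CTheory.inf_mem_iff T).1 hn).1
    simp only [ψ, Function.iterate_succ_apply', next, CTheory.inf_mem_iff] at hsucc
    simp only [CTheory.inf_mem_iff, CTheory.not_mem_iff] at hm
    exact hm.2 hsucc.2
  exact ⟨fun n => (ψ n).1 ⊓ (χ (ψ n)).not,
    fun m n hmn => hmn.lt_or_gt.elim (hlt m n) fun h => (hlt n m h).symm, fun n => (hχ _).2⟩

theorem RSge_two_iff_infinite_accPoints (𝒜 : Set (CTheory L)) :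
    RSge (2 : Ordinal.{w}) 𝒜 ↔ {T | IsAccPoint 𝒜 T}.Infinite := by
  rw [RSge_two]
  constructor
  · rintro ⟨φ, hinc, hφ⟩
    choose T hT hφT using fun k => exists_isAccPoint_mem (hφ k)
    refine Set.infinite_of_injective_forall_mem (fun m n hTmn => ?_) hT
    by_contra hmn
    exact inconsistent_iff.1 (hinc m n hmn) (T m) (hφT m) (hTmn ▸ hφT n)
  · intro hacc
    obtain ⟨φ, hinc, hφ⟩ := exists_pairwise_inconsistent_of_infinite hacc
    exact ⟨φ, hinc, fun k => (hφ k).elim fun T hT => hT.1 (φ k) hT.2⟩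

end AccumulationPoints

/-- Proposition 2.13: (1) `𝒯` is `0`-minimal iff `𝒯` is a singleton;
(2) `𝒯` is `1`-minimal iff `𝒯` is (infinite and) `e`-minimal; (3) `𝒯` is `2`-minimal iff
`𝒯` is `a`-minimal; (4) for any ordinal `α`, `𝒯` is `α`-minimal iff `RS(𝒯) = α` and
`ds(𝒯) = 1`. -/
theorem alphaMinimal_characterizations (𝒯 : Set (CTheory L)) :
    (AlphaMinimal 𝒯 0 ↔ ∃ T : CTheory L, 𝒯 = {T}) ∧
    (AlphaMinimal 𝒯 1 ↔ (𝒯.Infinite ∧ EMinimal 𝒯)) ∧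
    (AlphaMinimal 𝒯 2 ↔ AMinimal 𝒯) ∧
    (∀ α : Ordinal.{w}, AlphaMinimal 𝒯 α ↔ (RSeq 𝒯 α ∧ dsEq 𝒯 α 1)) := by
  refine ⟨?_, ?_, ?_, fun α => and_congr_right fun h => h.dsEq_one_iff.symm⟩
  · simp only [alphaMinimal_iff, RSge_zero, ← subsingleton_iff_forall_nbhd,
      Set.exists_eq_singleton_iff_nonempty_subsingleton]
  · simp only [alphaMinimal_iff, RSge_one, Set.not_infinite, EMinimal]
  · simp only [alphaMinimal_iff, RSge_two_iff_infinite_accPoints, Set.not_infinite, AMinimal]
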